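/- arXiv:1904.00704 — 5 statements merged into one kernel-verified Lean document; each statement's English description precedes it below -/
import Mathlib

section
/- Let l > 0, λ > 0 and Λ ≥ 0 be real numbers. The function μ ↦ S(μ, Λ) = l·μ / ((μ − l·Λ)·(μ − l·(Λ+λ))) is convex on the open ray (l·(Λ+λ), ∞). -/
open Set

private lemma convexOn_inv_shift (c : ℝ) :
    ConvexOn ℝ (Set.Ioi c) (fun x : ℝ => (x - c)⁻¹) := by
  have h := convexOn_zpow (𝕜 := ℝ) (-1)
  refine ⟨convex_Ioi c, fun x hx y hy p q hp hq hpq => ?_⟩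
  have hx' : x - c ∈ Set.Ioi (0:ℝ) := by simp [Set.mem_Ioi] at hx ⊢; linarith
  have hy' : y - c ∈ Set.Ioi (0:ℝ) := by simp [Set.mem_Ioi] at hy ⊢; linarith
  have := h.2 hx' hy' hp hq hpq
  simp only [zpow_neg, zpow_one, smul_eq_mul] at this ⊢
  have hcomb : p * x + q * y - c = p * (x - c) + q * (y - c) := by
    have : p * c + q * c = c := by rw [← add_mul, hpq, one_mul]
    ring_nf
    linarith [this]
  rw [hcomb]
  exact this

private lemma antitoneOn_inv_shift (c : ℝ) :
    AntitoneOn (fun x : ℝ => (x - c)⁻¹) (Set.Ioi c) := by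
  intro x hx y hy hxy
  simp only [Set.mem_Ioi] at hx hy
  exact inv_anti₀ (by linarith) (by linarith)

/-- Sojourn time `S(μ, Λ) = l·μ / ((μ − l·Λ)·(μ − l·(Λ+λ)))` is convex in `μ`
on the stability region `μ > l·(Λ+λ)`. -/
theorem sojourn_convexOn_mu (l lam Lam : ℝ) (hl : 0 < l) (hlam : 0 < lam) (hLam : 0 ≤ Lam) :
    ConvexOn ℝ (Set.Ioi (l * (Lam + lam)))
      (fun μ : ℝ => l * μ / ((μ - l * Lam) * (μ - l * (Lam + lam)))) := by
  set a := l * Lam with ha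
  set b := l * (Lam + lam) with hb
  have hab : a < b := by
    simp only [ha, hb]
    nlinarith
  have ha0 : 0 ≤ a := mul_nonneg hl.le hLam
  have hb0 : 0 < b := lt_of_le_of_lt ha0 hab
  -- convexity of components on Ioi b
  have h1 : ConvexOn ℝ (Set.Ioi b) (fun x : ℝ => (x - a)⁻¹) :=
    (convexOn_inv_shift a).subset (Set.Ioi_subset_Ioi hab.le) (convex_Ioi b)
  have h2 : ConvexOn ℝ (Set.Ioi b) (fun x : ℝ => (x - b)⁻¹) := convexOn_inv_shift b
  have hpos1 : ∀ ⦃x : ℝ⦄, x ∈ Set.Ioi b → (0:ℝ) ≤ (x - a)⁻¹ := by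
    intro x hx; simp only [Set.mem_Ioi] at hx
    exact inv_nonneg.2 (by linarith)
  have hpos2 : ∀ ⦃x : ℝ⦄, x ∈ Set.Ioi b → (0:ℝ) ≤ (x - b)⁻¹ := by
    intro x hx; simp only [Set.mem_Ioi] at hx
    exact inv_nonneg.2 (by linarith)
  have hmono : MonovaryOn (fun x : ℝ => (x - a)⁻¹) (fun x : ℝ => (x - b)⁻¹) (Set.Ioi b) :=
    ((antitoneOn_inv_shift a).mono (Set.Ioi_subset_Ioi hab.le)).monovaryOn
      (antitoneOn_inv_shift b)
  have hprod : ConvexOn ℝ (Set.Ioi b)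
      (fun x : ℝ => (x - a)⁻¹ * (x - b)⁻¹) :=
    h1.mul h2 hpos1 hpos2 hmono
  have hsum : ConvexOn ℝ (Set.Ioi b)
      (fun x : ℝ => l * (x - a)⁻¹ + (l * b) * ((x - a)⁻¹ * (x - b)⁻¹)) :=
    (h1.smul hl.le).add (hprod.smul (mul_nonneg hl.le hb0.le))
  -- the two functions agree on Ioi b
  refine ⟨convex_Ioi b, fun x hx y hy p q hp hq hpq => ?_⟩
  have key : ∀ z ∈ Set.Ioi b,
      l * z / ((z - a) * (z - b)) = l * (z - a)⁻¹ + (l * b) * ((z - a)⁻¹ * (z - b)⁻¹) := by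
    intro z hz
    simp only [Set.mem_Ioi] at hz
    have hza : z - a ≠ 0 := by have : a < b := hab; linarith
    have hzb : z - b ≠ 0 := by linarith
    field_simp
    ring
  have hmem : p • x + q • y ∈ Set.Ioi b := (convex_Ioi b) hx hy hp hq hpq
  simp only [smul_eq_mul] at hmem ⊢
  rw [key _ hx, key _ hy] at *
  rw [key _ hmem]
  have := hsum.2 hx hy hp hq hpq
  simpa using this
end

section
/- Let l > 0, λ > 0 and Λ ≥ 0 be real numbers. For every μ > l·(Λ+λ), the second derivative of the function μ ↦ S(μ, Λ) = l·μ / ((μ − l·Λ)·(μ − l·(Λ+λ))) at μ is strictly positive. -/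
/-!
With `a = l·Λ < b = l·(Λ+λ)`, partial fractions give
`l·μ / ((μ - a)(μ - b)) = l/(b - a) · (b/(μ - b) - a/(μ - a))`, so the second derivative is
`2l/(b - a) · (b/(μ - b)³ - a/(μ - a)³)`. It is positive on `μ > b` because `0 ≤ a < b` and
`0 < μ - b < μ - a`.
-/

open Filter Topology

theorem mul_div_sub_mul_sub_eq {K : Type*} [Field K] {l a b x : K} (hab : a ≠ b) (hxa : x ≠ a)
    (hxb : x ≠ b) :
    l * x / ((x - a) * (x - b)) = l / (b - a) * (b / (x - b) - a / (x - a)) := by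
  have := sub_ne_zero.2 hab.symm
  have := sub_ne_zero.2 hxa
  have := sub_ne_zero.2 hxb
  field_simp
  ring

section Calculus

variable {𝕜 : Type*} [NontriviallyNormedField 𝕜]

theorem deriv_inv_sub (d : 𝕜) : deriv (fun y => (y - d)⁻¹) = fun y => -((y - d) ^ 2)⁻¹ := by
  simpa using iter_deriv_inv_linear_sub 1 1 d

theorem hasDerivAt_deriv_inv_sub {d x : 𝕜} (hx : x ≠ d) :
    HasDerivAt (deriv fun y => (y - d)⁻¹) (2 / (x - d) ^ 3) x := by
  have hsecond : deriv (deriv fun y => (y - d)⁻¹) x = 2 / (x - d) ^ 3 := by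
    simpa [div_eq_mul_inv] using congrFun (iter_deriv_inv_linear_sub 2 1 d) x
  have hdiff : DifferentiableAt 𝕜 (deriv fun y => (y - d)⁻¹) x := by
    rw [deriv_inv_sub]
    exact (((differentiableAt_id.sub_const d).pow 2).inv (pow_ne_zero 2 (sub_ne_zero.2 hx))).neg
  exact hsecond ▸ hdiff.hasDerivAt

theorem deriv_deriv_mul_div_sub_mul_sub {l a b x : 𝕜} (hab : a ≠ b) (hxa : x ≠ a)
    (hxb : x ≠ b) :
    deriv (deriv fun y => l * y / ((y - a) * (y - b))) x =
      2 * l / (b - a) * (b / (x - b) ^ 3 - a / (x - a) ^ 3) := by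
  have hdiff : ∀ {d y : 𝕜}, y ≠ d → DifferentiableAt 𝕜 (fun y => (y - d)⁻¹) y := fun hy =>
    (differentiableAt_id.sub_const _).inv (sub_ne_zero.2 hy)
  have hfrac : (fun y => l * y / ((y - a) * (y - b))) =ᶠ[𝓝 x]
      fun y => l / (b - a) * (b * (y - b)⁻¹ - a * (y - a)⁻¹) := by
    filter_upwards [eventually_ne_nhds hxa, eventually_ne_nhds hxb] with y hya hyb
    simp only [← div_eq_mul_inv, mul_div_sub_mul_sub_eq hab hya hyb]
  have hderiv : deriv (fun y => l / (b - a) * (b * (y - b)⁻¹ - a * (y - a)⁻¹)) =ᶠ[𝓝 x]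
      fun y => l / (b - a) * (b * deriv (fun y => (y - b)⁻¹) y
        - a * deriv (fun y => (y - a)⁻¹) y) := by
    filter_upwards [eventually_ne_nhds hxa, eventually_ne_nhds hxb] with y hya hyb
    exact ((((hdiff hyb).hasDerivAt.const_mul b).sub
      ((hdiff hya).hasDerivAt.const_mul a)).const_mul _).deriv
  rw [hfrac.deriv.deriv_eq, hderiv.deriv_eq]
  refine ((((hasDerivAt_deriv_inv_sub hxb).const_mul b).sub
    ((hasDerivAt_deriv_inv_sub hxa).const_mul a)).const_mul _).deriv.trans ?_
  ring

end Calculus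

theorem div_sub_pow_lt_div_sub_pow {a b x : ℝ} (ha : 0 ≤ a) (hab : a < b) (hbx : b < x)
    (n : ℕ) : a / (x - a) ^ n < b / (x - b) ^ n := by
  have hxb : 0 < (x - b) ^ n := pow_pos (sub_pos.2 hbx) n
  calc a / (x - a) ^ n ≤ a / (x - b) ^ n :=
        div_le_div_of_nonneg_left ha hxb (pow_le_pow_left₀ (sub_pos.2 hbx).le (by linarith) n)
    _ < b / (x - b) ^ n := div_lt_div_of_pos_right hab hxb

/-- The second derivative of `μ ↦ l·μ / ((μ − l·Λ)·(μ − l·(Λ+λ)))` is strictly positive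
at every point of the stability region `μ > l·(Λ+λ)`. -/
theorem sojourn_second_deriv_mu_pos (l lam Lam : ℝ) (hl : 0 < l) (hlam : 0 < lam)
    (hLam : 0 ≤ Lam) (μ : ℝ) (hμ : l * (Lam + lam) < μ) :
    0 < deriv (deriv (fun μ : ℝ => l * μ / ((μ - l * Lam) * (μ - l * (Lam + lam))))) μ := by
  have hab : l * Lam < l * (Lam + lam) := mul_lt_mul_of_pos_left (by linarith) hl
  rw [deriv_deriv_mul_div_sub_mul_sub hab.ne (by linarith) hμ.ne']
  exact mul_pos (div_pos (by positivity) (sub_pos.2 hab))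
    (sub_pos.2 (div_sub_pow_lt_div_sub_pow (mul_nonneg hl.le hLam) hab hμ 3))
end

section
/- Let l > 0, λ > 0 and μ > l·λ be real numbers. The function Λ ↦ S(μ, Λ) = l·μ / ((μ − l·Λ)·(μ − l·(Λ+λ))) is convex on the interval [0, μ/l − λ). -/
open Set

/-- `x ↦ (c - l·x)⁻¹` is convex on the set where `c - l·x > 0`. -/
lemma inv_affine_convexOn (c l : ℝ) :
    ConvexOn ℝ {x : ℝ | 0 < c - l * x} (fun x : ℝ => (c - l * x)⁻¹) := by
  have hA : ∀ x : ℝ, ((-l) • (LinearMap.id : ℝ →ₗ[ℝ] ℝ)) (x - 0) + (c - l * 0) = c - l * x := by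
    intro x; simp; ring
  let A : ℝ →ᵃ[ℝ] ℝ :=
    AffineMap.mk' (fun x => c - l * x) ((-l) • (LinearMap.id : ℝ →ₗ[ℝ] ℝ)) 0
      (fun x => (hA x).symm)
  have h := (convexOn_zpow (𝕜 := ℝ) (-1)).comp_affineMap A
  have hset : A ⁻¹' (Ioi 0) = {x : ℝ | 0 < c - l * x} := by
    ext x; simp [A, AffineMap.coe_mk']
  have hfun : (fun x : ℝ => x ^ (-1 : ℤ)) ∘ A = fun x : ℝ => (c - l * x)⁻¹ := by
    funext x; simp [A, AffineMap.coe_mk', zpow_neg_one]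
  rwa [hset, hfun] at h

/-- Sojourn time `S(μ, Λ) = l·μ / ((μ − l·Λ)·(μ − l·(Λ+λ)))` is convex in `Λ`
on the interval `[0, μ/l − λ)`. -/
theorem sojourn_convexOn_Lambda (l lam μ : ℝ) (hl : 0 < l) (hlam : 0 < lam) (hμ : l * lam < μ) :
    ConvexOn ℝ (Set.Ico (0 : ℝ) (μ / l - lam))
      (fun Lam : ℝ => l * μ / ((μ - l * Lam) * (μ - l * (Lam + lam)))) := by
  set s : Set ℝ := Set.Ico (0 : ℝ) (μ / l - lam) with hs
  -- positivity facts on s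
  have hpos2 : ∀ x ∈ s, 0 < μ - l * (x + lam) := by
    intro x hx
    have hx2 : x < μ / l - lam := hx.2
    have : l * (x + lam) < μ := by
      have := (lt_div_iff₀ hl).mp (by linarith : x + lam < μ / l)
      linarith [this]
    linarith
  have hpos1 : ∀ x ∈ s, 0 < μ - l * x := by
    intro x hx
    have := hpos2 x hx
    nlinarith [hlam, hl]
  have hconvs : Convex ℝ s := convex_Ico _ _
  -- each factor is convex on s
  have h1 : ConvexOn ℝ s (fun x : ℝ => (μ - l * x)⁻¹) :=
    (inv_affine_convexOn μ l).subset (fun x hx => hpos1 x hx) hconvs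
  have h2 : ConvexOn ℝ s (fun x : ℝ => (μ - l * (x + lam))⁻¹) := by
    have h := (inv_affine_convexOn (μ - l * lam) l).subset
      (fun x hx => by
        have := hpos2 x hx
        simp only [Set.mem_setOf_eq]
        nlinarith) hconvs
    have : (fun x : ℝ => (μ - l * lam - l * x)⁻¹) = fun x : ℝ => (μ - l * (x + lam))⁻¹ := by
      funext x; ring_nf
    rwa [this] at h
  -- both factors are monotone on s, hence monovary
  have hmono1 : MonotoneOn (fun x : ℝ => (μ - l * x)⁻¹) s := by
    intro x hx y hy hxy
    exact inv_anti₀ (hpos1 y hy) (by nlinarith)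
  have hmono2 : MonotoneOn (fun x : ℝ => (μ - l * (x + lam))⁻¹) s := by
    intro x hx y hy hxy
    exact inv_anti₀ (hpos2 y hy) (by nlinarith)
  have hmul : ConvexOn ℝ s
      ((fun x : ℝ => (μ - l * x)⁻¹) * fun x : ℝ => (μ - l * (x + lam))⁻¹) :=
    h1.mul h2 (fun x hx => (inv_pos.mpr (hpos1 x hx)).le)
      (fun x hx => (inv_pos.mpr (hpos2 x hx)).le) (hmono1.monovaryOn hmono2)
  have hsmul := hmul.smul (c := l * μ) (mul_pos hl (lt_trans (mul_pos hl hlam) hμ)).le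
  have heq : (fun Lam : ℝ => l * μ / ((μ - l * Lam) * (μ - l * (Lam + lam)))) =
      fun x : ℝ => (l * μ) • ((fun x : ℝ => (μ - l * x)⁻¹) * fun x : ℝ => (μ - l * (x + lam))⁻¹) x := by
    funext x
    simp only [Pi.smul_apply, Pi.mul_apply, smul_eq_mul]
    rw [div_eq_mul_inv, mul_inv]
  rw [heq]; exact hsmul
end

section
/- Let l > 0, λ > 0 and μ > l·λ be real numbers. For every Λ ≥ 0 with l·(Λ+λ) < μ, the second derivative of the function Λ ↦ S(μ, Λ) = l·μ / ((μ − l·Λ)·(μ − l·(Λ+λ))) at Λ is strictly positive. -/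
/-!
With `a = μ - l Λ` and `b = μ - l (Λ + λ) = a - l λ`, partial fractions give
`S = (μ / λ) (1 / b - 1 / a)`. Since `(c - l Λ)⁻¹` has second derivative `2 l² / (c - l Λ)³`,
`S'' = (μ / λ) · 2 l² (1 / b³ - 1 / a³)`, which is positive because `0 < b < a`.
-/

open Filter Topology

section InvAffine

variable {𝕜 : Type*} [NontriviallyNormedField 𝕜] {c l x : 𝕜}

theorem hasDerivAt_const_sub_mul (c l x : 𝕜) : HasDerivAt (fun y => c - l * y) (-l) x := by
  simpa using ((hasDerivAt_id x).const_mul l).const_sub c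

theorem hasDerivAt_inv_const_sub_mul (h : c - l * x ≠ 0) :
    HasDerivAt (fun y => (c - l * y)⁻¹) (l / (c - l * x) ^ 2) x :=
  ((hasDerivAt_const_sub_mul c l x).fun_inv h).congr_deriv (by ring)

theorem hasDerivAt_div_sq_const_sub_mul (h : c - l * x ≠ 0) :
    HasDerivAt (fun y => l / (c - l * y) ^ 2) (2 * l ^ 2 / (c - l * x) ^ 3) x := by
  have hsq := (hasDerivAt_const_sub_mul c l x).fun_pow 2
  refine ((hasDerivAt_const x l).fun_div hsq (pow_ne_zero 2 h)).congr_deriv ?_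
  field_simp
  ring

end InvAffine

noncomputable section

def sojournTime (l lam μ Lam : ℝ) : ℝ :=
  l * μ / ((μ - l * Lam) * (μ - l * (Lam + lam)))

variable {l lam μ x : ℝ}

theorem sub_mul_add_eq_sub_sub_mul (l lam μ y : ℝ) :
    μ - l * (y + lam) = μ - l * lam - l * y := by
  ring

theorem sojournTime_eq_sub_inv (hlam : lam ≠ 0) (ha : μ - l * x ≠ 0)
    (hb : μ - l * (x + lam) ≠ 0) :
    sojournTime l lam μ x = μ / lam * ((μ - l * (x + lam))⁻¹ - (μ - l * x)⁻¹) := by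
  unfold sojournTime
  field_simp
  ring

theorem eventually_sojournTime_denominators_ne_zero (ha : μ - l * x ≠ 0)
    (hb : μ - l * (x + lam) ≠ 0) :
    ∀ᶠ y in 𝓝 x, μ - l * y ≠ 0 ∧ μ - l * (y + lam) ≠ 0 :=
  (ContinuousAt.eventually_ne (g := fun y => μ - l * y) (by fun_prop) ha).and
    (ContinuousAt.eventually_ne (g := fun y => μ - l * (y + lam)) (by fun_prop) hb)

theorem hasDerivAt_sojournTime (hlam : lam ≠ 0) (ha : μ - l * x ≠ 0)
    (hb : μ - l * (x + lam) ≠ 0) :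
    HasDerivAt (sojournTime l lam μ)
      (μ / lam * (l / (μ - l * (x + lam)) ^ 2 - l / (μ - l * x) ^ 2)) x := by
  have hb' := sub_mul_add_eq_sub_sub_mul l lam μ x ▸ hb
  have hF := ((hasDerivAt_inv_const_sub_mul hb').sub
    (hasDerivAt_inv_const_sub_mul ha)).const_mul (μ / lam)
  simp only [← sub_mul_add_eq_sub_sub_mul] at hF
  refine hF.congr_of_eventuallyEq ?_
  filter_upwards [eventually_sojournTime_denominators_ne_zero ha hb] with y hy
  exact sojournTime_eq_sub_inv hlam hy.1 hy.2

theorem deriv_deriv_sojournTime (hlam : lam ≠ 0) (ha : μ - l * x ≠ 0)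
    (hb : μ - l * (x + lam) ≠ 0) :
    deriv (deriv (sojournTime l lam μ)) x =
      μ / lam * (2 * l ^ 2 / (μ - l * (x + lam)) ^ 3 - 2 * l ^ 2 / (μ - l * x) ^ 3) := by
  have hb' := sub_mul_add_eq_sub_sub_mul l lam μ x ▸ hb
  have hG := ((hasDerivAt_div_sq_const_sub_mul hb').sub
    (hasDerivAt_div_sq_const_sub_mul ha)).const_mul (μ / lam)
  simp only [← sub_mul_add_eq_sub_sub_mul] at hG
  refine (hG.congr_of_eventuallyEq ?_).deriv
  filter_upwards [eventually_sojournTime_denominators_ne_zero ha hb] with y hy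
  exact (hasDerivAt_sojournTime hlam hy.1 hy.2).deriv

end

theorem sojourn_second_deriv_Lambda_pos_general (l lam μ : ℝ) (hl : 0 < l) (hlam : 0 < lam)
    (hμ : l * lam < μ) (Lam : ℝ) (hstab : l * (Lam + lam) < μ) :
    0 < deriv (deriv (fun Lam : ℝ => l * μ / ((μ - l * Lam) * (μ - l * (Lam + lam))))) Lam := by
  have hb : 0 < μ - l * (Lam + lam) := sub_pos.mpr hstab
  have hba : μ - l * (Lam + lam) < μ - l * Lam := by nlinarith
  have ha : 0 < μ - l * Lam := hb.trans hba
  have hμ₀ : 0 < μ := (mul_pos hl hlam).trans hμ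
  change 0 < deriv (deriv (sojournTime l lam μ)) Lam
  rw [deriv_deriv_sojournTime hlam.ne' ha.ne' hb.ne']
  have hcubes : 2 * l ^ 2 / (μ - l * Lam) ^ 3 < 2 * l ^ 2 / (μ - l * (Lam + lam)) ^ 3 :=
    div_lt_div_of_pos_left (by positivity) (by positivity)
      (pow_lt_pow_left₀ hba hb.le three_ne_zero)
  exact mul_pos (div_pos hμ₀ hlam) (sub_pos.mpr hcubes)

/-- The second derivative of `Λ ↦ l·μ / ((μ − l·Λ)·(μ − l·(Λ+λ)))` is strictly positive at
every `Λ ≥ 0` with `l·(Λ+λ) < μ`. -/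
theorem sojourn_second_deriv_Lambda_pos (l lam μ : ℝ) (hl : 0 < l) (hlam : 0 < lam)
    (hμ : l * lam < μ) (Lam : ℝ) (hLam : 0 ≤ Lam) (hstab : l * (Lam + lam) < μ) :
    0 < deriv (deriv (fun Lam : ℝ => l * μ / ((μ - l * Lam) * (μ - l * (Lam + lam))))) Lam :=
  sojourn_second_deriv_Lambda_pos_general l lam μ hl hlam hμ Lam hstab
end

section
/- Let V be a finite set, and for each v ∈ V let l(v) > 0, λ(v) > 0 and Λ(v) ≥ 0 be real numbers, and let D be a real number. Then the set { μ : V → ℝ | for all v ∈ V, μ(v) > l(v)·(Λ(v)+λ(v)), and Σ_{v∈V} l(v)·μ(v)/((μ(v) − l(v)·Λ(v))·(μ(v) − l(v)·(Λ(v)+λ(v)))) ≤ D } is a convex subset of V → ℝ. -/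
/-!
Partial fractions would write the sojourn time as a difference of convex functions; instead,
factor it as `l · x / (x - a) · (x - b)⁻¹` with `a = l Λ ≤ b = l (Λ + λ)`. Both factors are
nonnegative, convex and decreasing on `x > b` (the first because `x / (x - a) = 1 + a / (x - a)`
with `a ≥ 0`), and a product of nonnegative convex functions that vary together is convex.
The delay is then a sum of convex functions of the coordinates on the convex stability box, so
its sublevel set is convex.
-/

open Set

theorem ConvexOn.sum {𝕜 E β ι : Type*} [Semiring 𝕜] [PartialOrder 𝕜] [AddCommMonoid E]
    [AddCommMonoid β] [PartialOrder β] [IsOrderedAddMonoid β] [SMul 𝕜 E] [Module 𝕜 β]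
    {s : Set E} (hs : Convex 𝕜 s) (t : Finset ι) {f : ι → E → β}
    (hf : ∀ i ∈ t, ConvexOn 𝕜 s (f i)) :
    ConvexOn 𝕜 s fun x => ∑ i ∈ t, f i x := by
  classical
  induction t using Finset.induction with
  | empty => simpa using convexOn_const 0 hs
  | insert i t hi ih =>
    simp only [Finset.sum_insert hi]
    exact (hf i (t.mem_insert_self i)).add (ih fun j hj => hf j (Finset.mem_insert_of_mem hj))

lemma convexOn_inv_sub (c : ℝ) : ConvexOn ℝ (Ioi c) fun x => (x - c)⁻¹ := by
  have h := (convexOn_zpow (𝕜 := ℝ) (-1)).translate_left (-c)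
  have hs : (fun z => -c + z) ⁻¹' Ioi 0 = Ioi c := by ext; simp [← sub_eq_neg_add]
  rw [hs] at h
  exact h.congr fun x _ => by simp [sub_eq_add_neg]

lemma antitoneOn_inv_sub (c : ℝ) : AntitoneOn (fun x => (x - c)⁻¹) (Ioi c) :=
  fun _ hx _ _ hxy => inv_anti₀ (sub_pos.2 hx) (sub_le_sub_right hxy c)

lemma convexOn_div_sub {a : ℝ} (ha : 0 ≤ a) : ConvexOn ℝ (Ioi a) fun x => x / (x - a) := by
  refine ((convexOn_inv_sub a).smul ha).add_const 1 |>.congr fun x hx => ?_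
  have : x - a ≠ 0 := (sub_pos.2 hx).ne'
  simp only [Pi.add_apply, smul_eq_mul]
  field_simp
  ring

lemma antitoneOn_div_sub {a : ℝ} (ha : 0 ≤ a) : AntitoneOn (fun x => x / (x - a)) (Ioi a) := by
  intro x hx y hy hxy
  rw [div_le_div_iff₀ (sub_pos.2 hy) (sub_pos.2 hx)]
  nlinarith

theorem convexOn_div_mul_sub_sub {a b : ℝ} (ha : 0 ≤ a) (hab : a ≤ b) :
    ConvexOn ℝ (Ioi b) fun x => x / ((x - a) * (x - b)) := by
  have hsub : Ioi b ⊆ Ioi a := Ioi_subset_Ioi hab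
  have h := ((convexOn_div_sub ha).subset hsub (convex_Ioi b)).mul (convexOn_inv_sub b)
    (fun x hx => div_nonneg (ha.trans (hab.trans hx.le)) (sub_pos.2 (hsub hx)).le)
    (fun x hx => (inv_pos.2 (sub_pos.2 hx)).le)
    (((antitoneOn_div_sub ha).mono hsub).monovaryOn (antitoneOn_inv_sub b))
  exact h.congr fun x _ => by simp only [Pi.mul_apply, mul_inv, div_eq_mul_inv]; ring

theorem convexOn_mul_div_mul_sub_sub {l a b : ℝ} (hl : 0 ≤ l) (ha : 0 ≤ a) (hab : a ≤ b) :
    ConvexOn ℝ (Ioi b) fun x => l * x / ((x - a) * (x - b)) :=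
  ((convexOn_div_mul_sub_sub ha hab).smul hl).congr fun x _ => by
    simp only [smul_eq_mul, mul_div_assoc]

/-- The feasible set of capability assignments `μ : V → ℝ` satisfying, for each VNF `v`,
the stability condition `μ(v) > l(v)·(Λ(v)+λ(v))` together with the maximum-delay constraint
`Σ_v l(v)·μ(v)/((μ(v) − l(v)·Λ(v))·(μ(v) − l(v)·(Λ(v)+λ(v)))) ≤ D`, is convex. -/
theorem feasible_set_convex (V : Type*) [Fintype V] (l lam Lam : V → ℝ) (D : ℝ)
    (hl : ∀ v, 0 < l v) (hlam : ∀ v, 0 < lam v) (hLam : ∀ v, 0 ≤ Lam v) :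
    Convex ℝ {μ : V → ℝ |
      (∀ v, l v * (Lam v + lam v) < μ v) ∧
      ∑ v, l v * μ v / ((μ v - l v * Lam v) * (μ v - l v * (Lam v + lam v))) ≤ D} := by
  set S := univ.pi fun v => Ioi (l v * (Lam v + lam v))
  have hS : Convex ℝ S := convex_pi fun v _ => convex_Ioi _
  have hterm : ∀ v, ConvexOn ℝ S fun μ : V → ℝ =>
      l v * μ v / ((μ v - l v * Lam v) * (μ v - l v * (Lam v + lam v))) := by
    intro v
    have hab : l v * Lam v ≤ l v * (Lam v + lam v) :=
      mul_le_mul_of_nonneg_left (le_add_of_nonneg_right (hlam v).le) (hl v).le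
    have h := (convexOn_mul_div_mul_sub_sub (hl v).le (mul_nonneg (hl v).le (hLam v)) hab
      ).comp_linearMap (LinearMap.proj (R := ℝ) (φ := fun _ : V => ℝ) v)
    exact h.subset (fun μ hμ => hμ v (mem_univ v) : S ⊆ _) hS
  simpa [S] using (ConvexOn.sum hS Finset.univ fun v _ => hterm v).convex_le D
end
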